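/- Under Assumptions Q1, A1-i and A1-ii, for every payoff vector π ∈ ℝ^𝒜, every a ∈ 𝒜, and every exact-rate transition vector z_a for a at π, one has z_a · g_*[π] = h_{a*}[π]. -/

import Mathlib

/-!
Under A1-ii two players `b, c` see the same law of the best available payoff `π_*(A')` above
`max(π_b, π_c)`, while offers below one's own payoff yield no gain (Q1 puts `μ_Q` on `[0, ∞)`).
Hence `g_{b*}[π]` is antitone in `π_b`, and every action of `b_*[π](A')` attains
`g_{**}[π](A')`. A probability vector `y_a(A')` supported there thus has `y_a(A') · g_*[π] =
g_{**}[π](A')`, and summing over `A'` turns `z_a · g_*[π]` into `h_{a*}[π]`.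
-/

open MeasureTheory Finset
open scoped Classical

/-- The maximal payoff among actions in `S`. -/
noncomputable def piStar {A : Type*} (π : A → ℝ) (S : Finset A) : ℝ :=
  if h : S.Nonempty then S.sup' h π else 0

/-- The set of optimal actions in `S`: `b_*[π](S)`. -/
noncomputable def bStar {A : Type*} (π : A → ℝ) (S : Finset A) : Finset A :=
  S.filter (fun b => π b = piStar π S)

/-- `Q(q) = μ_Q((-∞, q])`. -/
noncomputable def Qfun (μQ : Measure ℝ) (q : ℝ) : ℝ := (μQ (Set.Iic q)).toReal

/-- The individual ex-ante first-order net gain `g_{a*}[π]`. -/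
noncomputable def gain {A : Type*} [Fintype A] [DecidableEq A]
    (P : A → Finset A → ℝ) (μQ : Measure ℝ) (π : A → ℝ) (a : A) : ℝ :=
  ∑ A' ∈ (Finset.univ.erase a).powerset,
    P a A' * ∫ q, max (piStar π A' - π a - q) 0 ∂μQ

/-- `g_{**}[π](S) = min_{b ∈ S} g_{b*}[π]`. -/
noncomputable def gainMin {A : Type*} [Fintype A] [DecidableEq A]
    (P : A → Finset A → ℝ) (μQ : Measure ℝ) (π : A → ℝ) (S : Finset A) : ℝ :=
  if h : S.Nonempty then S.inf' h (fun b => gain P μQ π b) else 0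

/-- The individual ex-ante second-order net gain `h_{a*}[π]`. -/
noncomputable def gain2 {A : Type*} [Fintype A] [DecidableEq A]
    (P : A → Finset A → ℝ) (μQ : Measure ℝ) (π : A → ℝ) (a : A) : ℝ :=
  ∑ A' ∈ (Finset.univ.erase a).powerset,
    P a A' * Qfun μQ (piStar π A' - π a) * (gainMin P μQ π A' - gain P μQ π a)

section IntegralMaxSub

variable {μ : Measure ℝ}

lemma ae_nonneg_of_Qfun_eq_zero [IsFiniteMeasure μ] (hQ : ∀ q : ℝ, q < 0 → Qfun μ q = 0) :
    ∀ᵐ q ∂μ, 0 ≤ q := by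
  have hIio : ⋃ n : ℕ, Set.Iic (-(1 / ((n : ℝ) + 1))) = Set.Iio 0 :=
    iUnion_Iic_eq_Iio_of_lt_of_tendsto (fun n => neg_neg_of_pos Nat.one_div_pos_of_nat)
      (neg_zero (G := ℝ) ▸ tendsto_one_div_add_atTop_nhds_zero_nat.neg)
  have hIio_null : μ (Set.Iio 0) = 0 := by
    rw [← hIio, measure_iUnion_null_iff]
    intro n
    have := hQ _ (neg_neg_of_pos (Nat.one_div_pos_of_nat (n := n)))
    rwa [Qfun, ENNReal.toReal_eq_zero_iff, or_iff_left (measure_ne_top _ _)] at this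
  rw [ae_iff]
  simp only [not_le]
  exact hIio_null

variable (hμ : ∀ᵐ q ∂μ, 0 ≤ q)
include hμ

lemma integrable_max_sub_zero [IsFiniteMeasure μ] (x : ℝ) :
    Integrable (fun q => max (x - q) 0) μ := by
  refine (integrable_const (max x 0)).mono' (by fun_prop) ?_
  filter_upwards [hμ] with q hq
  rw [Real.norm_of_nonneg (le_max_right _ _)]
  exact max_le_max (by linarith) le_rfl

lemma monotone_integral_max_sub_zero [IsFiniteMeasure μ] :
    Monotone fun x => ∫ q, max (x - q) 0 ∂μ := fun _ _ h =>
  integral_mono (integrable_max_sub_zero hμ _) (integrable_max_sub_zero hμ _)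
    fun _ => max_le_max (by linarith) le_rfl

lemma integral_max_sub_zero_eq_zero {x : ℝ} (hx : x ≤ 0) : ∫ q, max (x - q) 0 ∂μ = 0 := by
  refine integral_eq_zero_of_ae ?_
  filter_upwards [hμ] with q hq
  exact max_eq_right (by linarith)

end IntegralMaxSub

section LevelDecomposition

variable {A : Type*}

lemma piStar_eq_sup' (π : A → ℝ) {S : Finset A} (hS : S.Nonempty) : piStar π S = S.sup' hS π :=
  dif_pos hS

lemma piStar_mem_image [Fintype A] (π : A → ℝ) {S : Finset A} (hS : S.Nonempty) :
    piStar π S ∈ univ.image π := by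
  obtain ⟨d, -, hd⟩ := exists_mem_eq_sup' hS π
  exact mem_image.2 ⟨d, mem_univ d, by rw [piStar_eq_sup' π hS, hd]⟩

variable [DecidableEq A]

/-- With `p = P a` and `s` the subsets of `𝒜 ∖ {a}`, Assumption A1-ii says that this does not
depend on `a` as long as `a ∉ S`. -/
noncomputable def tailMass (p : Finset A → ℝ) (s : Finset (Finset A)) (S : Finset A) : ℝ :=
  ∑ A' ∈ s.filter (fun A' => (A' ∩ S).Nonempty), p A'

lemma tailMass_mono {p : Finset A → ℝ} (hp : ∀ A', 0 ≤ p A') (s : Finset (Finset A))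
    {S T : Finset A} (h : S ⊆ T) : tailMass p s S ≤ tailMass p s T :=
  sum_le_sum_of_subset_of_nonneg
    (monotone_filter_right s fun _ _ hS => Nonempty.mono (inter_subset_inter_left h) hS)
    fun _ _ _ => hp _

variable [Fintype A] (π : A → ℝ)

lemma inter_filter_le_nonempty_iff {S : Finset A} (hS : S.Nonempty) (w : ℝ) :
    (S ∩ univ.filter (w ≤ π ·)).Nonempty ↔ w ≤ piStar π S := by
  rw [inter_filter, inter_univ, filter_nonempty_iff, piStar_eq_sup' π hS, le_sup'_iff]

lemma inter_filter_lt_nonempty_iff {S : Finset A} (hS : S.Nonempty) (w : ℝ) :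
    (S ∩ univ.filter (w < π ·)).Nonempty ↔ w < piStar π S := by
  rw [inter_filter, inter_univ, filter_nonempty_iff, piStar_eq_sup' π hS, lt_sup'_iff]

lemma sum_mul_piStar_eq_sum_image (p : Finset A → ℝ) (s : Finset (Finset A)) (hp : p ∅ = 0)
    (f : ℝ → ℝ) :
    ∑ A' ∈ s, p A' * f (piStar π A') = ∑ w ∈ univ.image π,
      f w * (tailMass p s (univ.filter (w ≤ π ·)) - tailMass p s (univ.filter (w < π ·))) := by
  simp only [tailMass, sum_filter, ← sum_sub_distrib, mul_sum]
  rw [sum_comm]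
  refine sum_congr rfl fun A' _ => ?_
  rcases A'.eq_empty_or_nonempty with rfl | hA'
  · simp [hp]
  have hlevel : ∀ w, ((if (A' ∩ univ.filter (w ≤ π ·)).Nonempty then p A' else 0) -
      if (A' ∩ univ.filter (w < π ·)).Nonempty then p A' else 0) =
      if piStar π A' = w then p A' else 0 := by
    intro w
    simp only [inter_filter_le_nonempty_iff π hA', inter_filter_lt_nonempty_iff π hA']
    split_ifs <;> first | (exfalso; order) | ring
  simp only [hlevel, mul_ite, mul_zero, sum_ite_eq, piStar_mem_image π hA', if_true]
  ring

lemma univ_filter_le_subset_sdiff {w : ℝ} {b c : A} (hb : π b < w) (hc : π c < w) :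
    univ.filter (w ≤ π ·) ⊆ univ \ {b, c} := by
  intro d hd
  simp only [mem_filter, mem_univ, true_and] at hd
  simp only [mem_sdiff, mem_univ, mem_insert, mem_singleton, true_and]
  rintro (rfl | rfl) <;> linarith

end LevelDecomposition

section Gain

variable {A : Type*} [Fintype A] [DecidableEq A] {P : A → Finset A → ℝ} {μ : Measure ℝ}
  [IsFiniteMeasure μ] (hμ : ∀ᵐ q ∂μ, 0 ≤ q) (π : A → ℝ)
include hμ

lemma gain_le_gain_of_le {b c : A} (hPb : P b ∅ = 0) (hPc : P c ∅ = 0)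
    (hPc_nonneg : ∀ A', 0 ≤ P c A')
    (hbc : ∀ S ⊆ univ \ {b, c}, tailMass (P b) (univ.erase b).powerset S =
      tailMass (P c) (univ.erase c).powerset S)
    (hcb : π c ≤ π b) : gain P μ π b ≤ gain P μ π c := by
  rw [gain, gain, sum_mul_piStar_eq_sum_image π _ _ hPb fun x => ∫ q, max (x - π b - q) 0 ∂μ,
    sum_mul_piStar_eq_sum_image π _ _ hPc fun x => ∫ q, max (x - π c - q) 0 ∂μ]
  refine sum_le_sum fun w _ => ?_
  have hlt_le : univ.filter (w < π ·) ⊆ univ.filter (w ≤ π ·) :=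
    monotone_filter_right _ fun _ _ h => h.le
  have hlevel_nonneg : 0 ≤ tailMass (P c) (univ.erase c).powerset (univ.filter (w ≤ π ·)) -
      tailMass (P c) (univ.erase c).powerset (univ.filter (w < π ·)) :=
    sub_nonneg.2 (tailMass_mono hPc_nonneg _ hlt_le)
  by_cases hw : w ≤ π b
  · rw [integral_max_sub_zero_eq_zero hμ (by linarith), zero_mul]
    exact mul_nonneg (integral_nonneg fun _ => le_max_right _ _) hlevel_nonneg
  · have hsub := univ_filter_le_subset_sdiff π (not_le.1 hw) (hcb.trans_lt (not_le.1 hw))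
    rw [hbc _ hsub, hbc _ (hlt_le.trans hsub)]
    exact mul_le_mul_of_nonneg_right
      (monotone_integral_max_sub_zero hμ (by linarith : w - π b ≤ w - π c)) hlevel_nonneg

lemma gain_eq_gainMin_of_mem_bStar (hP_nonneg : ∀ a A', 0 ≤ P a A') (hP_empty : ∀ a, P a ∅ = 0)
    (hA1ii : ∀ a b : A, ∀ S ⊆ univ \ {a, b}, tailMass (P a) (univ.erase a).powerset S =
      tailMass (P b) (univ.erase b).powerset S)
    {S : Finset A} (hS : S.Nonempty) {b : A} (hb : b ∈ bStar π S) :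
    gain P μ π b = gainMin P μ π S := by
  obtain ⟨hbS, hπb⟩ := mem_filter.1 hb
  rw [gainMin, dif_pos hS]
  refine le_antisymm (le_inf' hS _ fun c hc => ?_) (inf'_le _ hbS)
  refine gain_le_gain_of_le hμ π (hP_empty b) (hP_empty c) (hP_nonneg c) (hA1ii b c) ?_
  rw [hπb, piStar_eq_sup' π hS]
  exact le_sup' π hc

end Gain

lemma sum_mul_eq_of_mem_stdSimplex {ι : Type*} [Fintype ι] {y g : ι → ℝ} {m : ℝ}
    (hy : y ∈ stdSimplex ℝ ι) (hg : ∀ i, y i ≠ 0 → g i = m) : ∑ i, y i * g i = m := by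
  calc ∑ i, y i * g i = ∑ i, y i * m :=
        sum_congr rfl fun i _ => by
          rcases eq_or_ne (y i) 0 with hi | hi
          · simp [hi]
          · rw [hg i hi]
    _ = m := by rw [← sum_mul, hy.2, one_mul]

theorem stmt5_general {A : Type*} [Fintype A] [DecidableEq A]
    (P : A → Finset A → ℝ) (μQ : Measure ℝ) [IsProbabilityMeasure μQ]
    (hPnn : ∀ a A', 0 ≤ P a A')
    (hPempty : ∀ a, P a (∅ : Finset A) = 0)
    -- Assumption Q1
    (hQ1a : ∀ q : ℝ, q < 0 → Qfun μQ q = 0)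
    -- Assumption A1-ii
    (hA1ii : ∀ a b : A, ∀ S : Finset A, S ⊆ Finset.univ \ {a, b} →
      ∑ A' ∈ (Finset.univ.erase a).powerset.filter (fun A' => (A' ∩ S).Nonempty), P a A'
        = ∑ A' ∈ (Finset.univ.erase b).powerset.filter (fun A' => (A' ∩ S).Nonempty), P b A')
    (π : A → ℝ) (a : A)
    (y : Finset A → A → ℝ)
    (hy : ∀ A' ∈ (Finset.univ.erase a).powerset, A'.Nonempty →
      y A' ∈ stdSimplex ℝ A ∧ ∀ b, y A' b ≠ 0 → b ∈ bStar π A') :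
    ∑ b : A,
        (∑ A' ∈ (Finset.univ.erase a).powerset,
          P a A' * Qfun μQ (piStar π A' - π a) *
            (y A' b - (if b = a then (1 : ℝ) else 0))) * gain P μQ π b
      = gain2 P μQ π a := by
  have hμ := ae_nonneg_of_Qfun_eq_zero hQ1a
  simp only [gain2, sum_mul]
  rw [sum_comm]
  refine sum_congr rfl fun A' hA' => ?_
  rcases A'.eq_empty_or_nonempty with rfl | hne
  · simp [hPempty]
  obtain ⟨hy_simplex, hy_supp⟩ := hy A' hA' hne
  have hyg : ∑ b, y A' b * gain P μQ π b = gainMin P μQ π A' :=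
    sum_mul_eq_of_mem_stdSimplex hy_simplex fun b hb =>
      gain_eq_gainMin_of_mem_bStar hμ π hPnn hPempty hA1ii hne (hy_supp b hb)
  simp only [mul_assoc, ← mul_sum, sub_mul, sum_sub_distrib, hyg, ite_mul, one_mul, zero_mul,
    sum_ite_eq', mem_univ, if_true]

/-- For every exact-rate transition vector `z_a` for `a` at `π` (built from a family
`y` of probability vectors supported on the optimal available actions),
`z_a · g_*[π] = h_{a*}[π]`. -/
theorem stmt5 {A : Type*} [Fintype A] [DecidableEq A] [Nonempty A]
    (P : A → Finset A → ℝ) (μQ : Measure ℝ) [IsProbabilityMeasure μQ]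
    (hPnn : ∀ a A', 0 ≤ P a A')
    (hPsupp : ∀ a A', ¬ A' ⊆ Finset.univ.erase a → P a A' = 0)
    (hPempty : ∀ a, P a (∅ : Finset A) = 0)
    (hPsum : ∀ a, ∑ A' ∈ (Finset.univ.erase a).powerset, P a A' = 1)
    -- Assumption Q1
    (hQ1a : ∀ q : ℝ, q < 0 → Qfun μQ q = 0)
    (hQ1b : ∀ q : ℝ, 0 < q → 0 < Qfun μQ q)
    -- Assumption A1-i
    (hA1i : ∀ a b : A, b ≠ a →
      0 < ∑ A' ∈ (Finset.univ.erase a).powerset.filter (fun A' => b ∈ A'), P a A')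
    -- Assumption A1-ii
    (hA1ii : ∀ a b : A, ∀ S : Finset A, S ⊆ Finset.univ \ {a, b} →
      ∑ A' ∈ (Finset.univ.erase a).powerset.filter (fun A' => (A' ∩ S).Nonempty), P a A'
        = ∑ A' ∈ (Finset.univ.erase b).powerset.filter (fun A' => (A' ∩ S).Nonempty), P b A')
    (π : A → ℝ) (a : A)
    (y : Finset A → A → ℝ)
    (hy : ∀ A' ∈ (Finset.univ.erase a).powerset, A'.Nonempty →
      y A' ∈ stdSimplex ℝ A ∧ ∀ b, y A' b ≠ 0 → b ∈ bStar π A') :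
    ∑ b : A,
        (∑ A' ∈ (Finset.univ.erase a).powerset,
          P a A' * Qfun μQ (piStar π A' - π a) *
            (y A' b - (if b = a then (1 : ℝ) else 0))) * gain P μQ π b
      = gain2 P μQ π a :=
  stmt5_general P μQ hPnn hPempty hQ1a hA1ii π a y hy
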